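/- arXiv:1811.01816 — 2 statements merged into one kernel-verified Lean document; each statement's English description precedes it below -/
import Mathlib

section
/- Let (X,w) be a pure d-dimensional simplicial complex on {1,…,n} with a balanced weight function, and suppose (X,w) is a 0-local spectral expander. Then for every 1 ≤ k < d, the symmetric matrix D_k·((k/(k+1))·P_k^∨ + (1/(k+1))·I − P_k^∧) is positive semidefinite, where D_k is the diagonal matrix indexed by X(k) with entries w(τ). Equivalently, P_k^∧ ≼ (k/(k+1))·P_k^∨ + (1/(k+1))·I with respect to the inner product ⟨φ,ψ⟩ = Σ_{τ∈X(k)} w(τ)φ(τ)ψ(τ). -/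
/-!
Up to the factor `k + 1`, the matrix in question is the sum over `τ ∈ X(k-1)` of the local
matrices `L_τ(σ, σ') = [τ ⊆ σ, σ'] (w σ w σ' / w τ - [σ ≠ σ', σ ∪ σ' ∈ X] w (σ ∪ σ'))`,
so it suffices that each `L_τ` is positive semidefinite. Identifying the coface `τ ∪ {i}` with
the vertex `i` of the link, `L_τ` is the compression of `w(τ)⁻¹ (A_τ 𝟙)(A_τ 𝟙)ᵀ - A_τ`, where
balancedness gives `A_τ 𝟙 = (w (τ ∪ {i}))ᵢ` and `𝟙ᵀ A_τ 𝟙 = w τ`. That matrix is positive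
semidefinite by a reverse Cauchy–Schwarz inequality: a quadratic form `q` with at most one
positive eigenvalue satisfies `q(y) q(u) ≤ b(y, u)²` whenever `q(u) > 0`.
-/

open Matrix Finset
open scoped Classical

noncomputable section

variable (n : ℕ)

/-- `X` is a pure `d`-dimensional simplicial complex on `{1,…,n}`:
nonempty, downward closed, and every face is contained in a face of cardinality `d`. -/
def IsPureComplex (X : Finset (Finset (Fin n))) (d : ℕ) : Prop :=
  X.Nonempty ∧ (∀ σ ∈ X, ∀ τ ⊆ σ, τ ∈ X) ∧
    (∀ σ ∈ X, ∃ ρ ∈ X, ρ.card = d ∧ σ ⊆ ρ)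

/-- `w` is a balanced weight function on the pure `d`-dimensional complex `X`. -/
def IsBalanced (X : Finset (Finset (Fin n))) (d : ℕ) (w : Finset (Fin n) → ℝ) : Prop :=
  (∀ τ ∈ X, 0 < w τ) ∧
    (∀ τ ∈ X, τ.card < d →
      w τ = ∑ σ ∈ X.filter (fun σ => τ ⊆ σ ∧ σ.card = τ.card + 1), w σ)

/-- The (zero-padded) weighted adjacency matrix of the 1-skeleton of the link `X_τ`:
entry `(i,j)` is `w(τ∪{i,j})` when `i ≠ j`, `i,j ∉ τ` and `τ∪{i,j} ∈ X`, and `0` otherwise. -/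
def linkMat (X : Finset (Finset (Fin n))) (w : Finset (Fin n) → ℝ)
    (τ : Finset (Fin n)) : Matrix (Fin n) (Fin n) ℝ :=
  Matrix.of fun i j =>
    if i ≠ j ∧ i ∉ τ ∧ j ∉ τ ∧ insert i (insert j τ) ∈ X then w (insert i (insert j τ)) else 0

/-- `(X,w)` is a 0-local spectral expander: for every face `τ` of cardinality at most `d−2`,
the link adjacency matrix `A_τ` has at most one strictly positive eigenvalue
(counted with multiplicity). -/
def IsZeroLSE (X : Finset (Finset (Fin n))) (d : ℕ) (w : Finset (Fin n) → ℝ) : Prop :=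
  ∀ τ ∈ X, τ.card ≤ d - 2 →
    ∀ hA : (linkMat n X w τ).IsHermitian,
      (Finset.univ.filter fun i => 0 < hA.eigenvalues i).card ≤ 1

/-- The faces of cardinality `k`, as a type. -/
abbrev Face (X : Finset (Finset (Fin n))) (k : ℕ) := {τ : Finset (Fin n) // τ ∈ X ∧ τ.card = k}

/-- The upper walk matrix `P_k^∧`, indexed by `X(k)`. -/
def Pup (X : Finset (Finset (Fin n))) (w : Finset (Fin n) → ℝ) (k : ℕ) :
    Matrix (Face n X k) (Face n X k) ℝ :=
  Matrix.of fun τ σ =>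
    if τ = σ then 1 / ((k : ℝ) + 1)
    else if τ.1 ∪ σ.1 ∈ X ∧ (τ.1 ∪ σ.1).card = k + 1 then
      w (τ.1 ∪ σ.1) / (((k : ℝ) + 1) * w τ.1)
    else 0

/-- The lower walk matrix `P_k^∨`, indexed by `X(k)`. -/
def Pdown (X : Finset (Finset (Fin n))) (w : Finset (Fin n) → ℝ) (k : ℕ) :
    Matrix (Face n X k) (Face n X k) ℝ :=
  Matrix.of fun σ σ' =>
    if σ = σ' then ∑ τ ∈ X.filter (fun τ => τ ⊆ σ.1 ∧ τ.card = k - 1), w σ.1 / ((k : ℝ) * w τ)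
    else if σ.1 ∩ σ'.1 ∈ X ∧ (σ.1 ∩ σ'.1).card = k - 1 then
      w σ'.1 / ((k : ℝ) * w (σ.1 ∩ σ'.1))
    else 0

theorem reverse_cauchy_schwarz_of_card_pos_le_one {ι : Type*} [Fintype ι] (μ a b : ι → ℝ)
    (hμ : #{i | 0 < μ i} ≤ 1) (hb : 0 < ∑ i, μ i * b i * b i) :
    (∑ i, μ i * a i * a i) * (∑ i, μ i * b i * b i) ≤ (∑ i, μ i * a i * b i) ^ 2 := by
  obtain ⟨i₀, -, hi₀⟩ := exists_lt_of_sum_lt (hb.trans_eq' sum_const_zero.symm)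
  have hμi₀ : 0 < μ i₀ := by nlinarith [mul_self_nonneg (b i₀)]
  have hbi₀ : b i₀ ≠ 0 := by rintro h; simp [h] at hi₀
  have hμ_nonpos : ∀ i ≠ i₀, μ i ≤ 0 := fun i hi => by
    by_contra! h
    have : #{i, i₀} ≤ #{i | 0 < μ i} := card_le_card fun j => by aesop
    rw [card_pair hi] at this
    omega
  set t := a i₀ / b i₀
  -- `a - t b` vanishes at the only index with a positive weight
  have hform : ∑ i, μ i * (a i - t * b i) ^ 2 ≤ 0 := sum_nonpos fun i _ => by
    rcases eq_or_ne i i₀ with rfl | hi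
    · simp [t, hbi₀]
    · exact mul_nonpos_of_nonpos_of_nonneg (hμ_nonpos i hi) (sq_nonneg _)
  have hexpand : ∑ i, μ i * (a i - t * b i) ^ 2 = ∑ i, μ i * a i * a i
      - 2 * t * ∑ i, μ i * a i * b i + t ^ 2 * ∑ i, μ i * b i * b i := by
    simp only [mul_sum, ← sum_sub_distrib, ← sum_add_distrib]
    exact sum_congr rfl fun i _ => by ring
  rw [hexpand] at hform
  nlinarith [sq_nonneg (∑ i, μ i * a i * b i - t * ∑ i, μ i * b i * b i)]

theorem Matrix.IsHermitian.dotProduct_mulVec_eq_sum_eigenvalues {ι : Type*} [Fintype ι]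
    [DecidableEq ι] {A : Matrix ι ι ℝ} (hA : A.IsHermitian) (v v' : ι → ℝ) :
    v ⬝ᵥ A *ᵥ v' = ∑ i, hA.eigenvalues i *
      ((hA.eigenvectorUnitary : Matrix ι ι ℝ)ᵀ *ᵥ v) i *
      ((hA.eigenvectorUnitary : Matrix ι ι ℝ)ᵀ *ᵥ v') i := by
  set U : Matrix ι ι ℝ := (hA.eigenvectorUnitary : Matrix ι ι ℝ)
  have hU : star U = Uᵀ := by ext; simp [star, conjTranspose_apply]
  have hvU : v ᵥ* U = Uᵀ *ᵥ v := by rw [← vecMul_transpose, transpose_transpose]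
  conv_lhs => rw [hA.spectral_theorem, Unitary.conjStarAlgAut_apply]
  rw [← mulVec_mulVec, ← mulVec_mulVec, dotProduct_mulVec, hvU, hU]
  simp only [dotProduct, mulVec_diagonal, Function.comp, RCLike.ofReal_real_eq_id, id]
  exact sum_congr rfl fun i _ => by ring

theorem Matrix.IsHermitian.reverse_cauchy_schwarz {ι : Type*} [Fintype ι] [DecidableEq ι]
    {A : Matrix ι ι ℝ} (hA : A.IsHermitian) (hpos : #{i | 0 < hA.eigenvalues i} ≤ 1)
    {u : ι → ℝ} (hu : 0 < u ⬝ᵥ A *ᵥ u) (y : ι → ℝ) :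
    (y ⬝ᵥ A *ᵥ y) * (u ⬝ᵥ A *ᵥ u) ≤ (y ⬝ᵥ A *ᵥ u) ^ 2 := by
  simp only [hA.dotProduct_mulVec_eq_sum_eigenvalues] at hu ⊢
  exact reverse_cauchy_schwarz_of_card_pos_le_one _ _ _ hpos hu

theorem Matrix.IsHermitian.posSemidef_inv_smul_vecMulVec_sub {ι : Type*} [Fintype ι]
    [DecidableEq ι] {A : Matrix ι ι ℝ} (hA : A.IsHermitian)
    (hpos : #{i | 0 < hA.eigenvalues i} ≤ 1) {u : ι → ℝ} (hu : 0 < u ⬝ᵥ A *ᵥ u) :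
    ((u ⬝ᵥ A *ᵥ u)⁻¹ • vecMulVec (A *ᵥ u) (A *ᵥ u) - A).PosSemidef := by
  have hvv : (vecMulVec (A *ᵥ u) (A *ᵥ u)).IsHermitian := by
    simpa using (posSemidef_vecMulVec_self_star (A *ᵥ u)).isHermitian
  refine posSemidef_iff_dotProduct_mulVec.2 ⟨(hvv.smul (IsSelfAdjoint.all _)).sub hA, fun y => ?_⟩
  have hy := hA.reverse_cauchy_schwarz hpos hu y
  rw [star_trivial, sub_mulVec, smul_mulVec, vecMulVec_mulVec, dotProduct_sub, dotProduct_smul,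
    dotProduct_smul, dotProduct_comm (A *ᵥ u)]
  simp only [MulOpposite.smul_eq_mul_unop, MulOpposite.unop_op, smul_eq_mul, sub_nonneg]
  rw [inv_mul_eq_div, le_div_iff₀ hu]
  nlinarith

theorem sum_filter_card_ite_subset {α : Type*} [DecidableEq α] {X : Finset (Finset α)}
    {s : Finset α} {m : ℕ} (hs : s ∈ X) (hsm : s.card ≤ m) (f : Finset α → ℝ) :
    ∑ τ ∈ X.filter (·.card = m), (if τ ⊆ s then f τ else 0) = if s.card = m then f s else 0 := by
  split_ifs with hsm'
  · rw [sum_eq_single_of_mem s (mem_filter.2 ⟨hs, hsm'⟩), if_pos subset_rfl]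
    intro τ hτ hτs
    rw [if_neg fun h => hτs (eq_of_subset_of_card_le h (by rw [hsm', (mem_filter.1 hτ).2]))]
  · refine sum_eq_zero fun τ hτ => if_neg fun h => ?_
    have := card_le_card h
    have := (mem_filter.1 hτ).2
    omega

theorem card_inter_lt_of_ne {α : Type*} [DecidableEq α] {s t : Finset α} {k : ℕ}
    (hs : s.card = k) (ht : t.card = k) (hst : s ≠ t) : (s ∩ t).card < k := by
  by_contra! h
  have hsub : s ⊆ t := inter_eq_left.1 (eq_of_subset_of_card_le inter_subset_left (hs ▸ h))
  exact hst (eq_of_subset_of_card_le hsub (by rw [hs, ht]))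

section Link

variable {n} {X : Finset (Finset (Fin n))} {d k : ℕ} {w : Finset (Fin n) → ℝ}

theorem IsBalanced.eq_sum_insert (hw : IsBalanced n X d w) {ρ : Finset (Fin n)} (hρ : ρ ∈ X)
    (hρd : ρ.card < d) :
    w ρ = ∑ i ∈ univ.filter (fun i => i ∉ ρ ∧ insert i ρ ∈ X), w (insert i ρ) := by
  rw [hw.2 ρ hρ hρd]
  refine (sum_bij (fun i _ => insert i ρ) (fun i hi => ?_) (fun i hi j hj hij => ?_)
    (fun σ hσ => ?_) (fun _ _ => rfl)).symm
  · simp only [mem_filter, mem_univ, true_and] at hi ⊢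
    exact ⟨hi.2, subset_insert _ _, card_insert_of_notMem hi.1⟩
  · simp only [mem_filter, mem_univ, true_and] at hi
    exact (insert_inj hi.1).1 hij
  · simp only [mem_filter] at hσ
    obtain ⟨i, hi, rfl⟩ := exists_eq_insert_iff.2 ⟨hσ.2.1, hσ.2.2.symm⟩
    exact ⟨i, by simp [hi, hσ.1], rfl⟩

theorem linkMat_isHermitian (τ : Finset (Fin n)) : (linkMat n X w τ).IsHermitian := by
  ext i j
  simp only [conjTranspose_apply, linkMat, of_apply, star_trivial, insert_comm j i]
  exact if_congr (by tauto) rfl rfl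

theorem linkMat_mulVec_one (hdown : ∀ σ ∈ X, ∀ τ ⊆ σ, τ ∈ X) (hw : IsBalanced n X d w)
    {τ : Finset (Fin n)} (hτd : τ.card + 1 < d) :
    linkMat n X w τ *ᵥ 1 = fun i => if i ∉ τ ∧ insert i τ ∈ X then w (insert i τ) else 0 := by
  ext i
  simp only [mulVec, dotProduct, Pi.one_apply, mul_one]
  split_ifs with hi
  · rw [hw.eq_sum_insert hi.2 (by rwa [card_insert_of_notMem hi.1]), sum_filter]
    refine sum_congr rfl fun j _ => ?_
    simp only [linkMat, of_apply, mem_insert, insert_comm i j]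
    exact if_congr (by tauto) rfl rfl
  · refine sum_eq_zero fun j _ => ?_
    simp only [linkMat, of_apply, ite_eq_right_iff]
    exact fun h => absurd ⟨h.2.1, hdown _ h.2.2.2 _ (insert_subset_insert _ (subset_insert _ _))⟩ hi

theorem one_dotProduct_linkMat_mulVec_one (hdown : ∀ σ ∈ X, ∀ τ ⊆ σ, τ ∈ X)
    (hw : IsBalanced n X d w) {τ : Finset (Fin n)} (hτ : τ ∈ X) (hτd : τ.card + 1 < d) :
    1 ⬝ᵥ linkMat n X w τ *ᵥ 1 = w τ := by
  rw [linkMat_mulVec_one hdown hw hτd, one_dotProduct, ← sum_filter,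
    hw.eq_sum_insert hτ (by omega)]

def linkIncidence (X : Finset (Finset (Fin n))) (k : ℕ) (τ : Finset (Fin n)) :
    Matrix (Fin n) (Face n X k) ℝ :=
  of fun i σ => if i ∉ τ ∧ σ.1 = insert i τ then 1 else 0

def localMat (X : Finset (Finset (Fin n))) (w : Finset (Fin n) → ℝ) (k : ℕ)
    (τ : Finset (Fin n)) : Matrix (Face n X k) (Face n X k) ℝ :=
  of fun σ σ' => if τ ⊆ σ.1 ∧ τ ⊆ σ'.1 then
    w σ.1 * w σ'.1 / w τ - if σ ≠ σ' ∧ σ.1 ∪ σ'.1 ∈ X then w (σ.1 ∪ σ'.1) else 0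
  else 0

theorem sum_linkIncidence_mul {τ : Finset (Fin n)} {σ : Face n X k} {i : Fin n} (hi : i ∉ τ)
    (hσ : σ.1 = insert i τ) (f : Fin n → ℝ) : ∑ j, linkIncidence X k τ j σ * f j = f i := by
  have hcond : ∀ j, (j ∉ τ ∧ insert i τ = insert j τ) ↔ j = i := fun j =>
    ⟨fun h => ((insert_inj h.1).1 h.2.symm), by rintro rfl; exact ⟨hi, rfl⟩⟩
  simp [linkIncidence, hσ, hcond]

theorem linkIncidence_eq_zero {τ : Finset (Fin n)} {σ : Face n X k} (h : ¬τ ⊆ σ.1) (j : Fin n) :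
    linkIncidence X k τ j σ = 0 := by
  rw [linkIncidence, of_apply, if_neg]
  exact fun hj => h (hj.2 ▸ subset_insert _ _)

theorem transpose_linkIncidence_mul_mul_apply {τ : Finset (Fin n)} (B : Matrix (Fin n) (Fin n) ℝ)
    {σ σ' : Face n X k} {i j : Fin n} (hi : i ∉ τ) (hσ : σ.1 = insert i τ) (hj : j ∉ τ)
    (hσ' : σ'.1 = insert j τ) :
    ((linkIncidence X k τ)ᵀ * B * linkIncidence X k τ) σ σ' = B i j := by
  simp only [mul_apply, transpose_apply]
  simp_rw [mul_comm _ (linkIncidence X k τ _ σ')]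
  rw [sum_linkIncidence_mul hj hσ', sum_linkIncidence_mul hi hσ]

theorem transpose_linkIncidence_mul_mul_apply_of_not_subset {τ : Finset (Fin n)}
    (B : Matrix (Fin n) (Fin n) ℝ) {σ σ' : Face n X k} (h : ¬(τ ⊆ σ.1 ∧ τ ⊆ σ'.1)) :
    ((linkIncidence X k τ)ᵀ * B * linkIncidence X k τ) σ σ' = 0 := by
  rcases not_and_or.1 h with h | h <;> simp [mul_apply, linkIncidence_eq_zero h]

theorem localMat_eq (hdown : ∀ σ ∈ X, ∀ τ ⊆ σ, τ ∈ X) (hw : IsBalanced n X d w)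
    {τ : Finset (Fin n)} (hτk : τ.card + 1 = k) (hkd : k < d) :
    localMat X w k τ = (linkIncidence X k τ)ᵀ *
      ((w τ)⁻¹ • vecMulVec (linkMat n X w τ *ᵥ 1) (linkMat n X w τ *ᵥ 1) - linkMat n X w τ) *
      linkIncidence X k τ := by
  ext σ σ'
  by_cases h : τ ⊆ σ.1 ∧ τ ⊆ σ'.1
  · obtain ⟨i, hi, hσ⟩ := exists_eq_insert_iff.2 ⟨h.1, by rw [σ.2.2, hτk]⟩
    obtain ⟨j, hj, hσ'⟩ := exists_eq_insert_iff.2 ⟨h.2, by rw [σ'.2.2, hτk]⟩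
    have hσσ' : σ ≠ σ' ↔ i ≠ j := by
      rw [Ne, Subtype.ext_iff, ← hσ, ← hσ', insert_inj hi]
    have hunion : σ.1 ∪ σ'.1 = insert i (insert j τ) := by
      rw [← hσ, ← hσ']; ext; simp; tauto
    rw [transpose_linkIncidence_mul_mul_apply _ hi hσ.symm hj hσ'.symm, localMat, of_apply,
      if_pos h, linkMat_mulVec_one hdown hw (by omega)]
    simp only [Matrix.sub_apply, Matrix.smul_apply, vecMulVec_apply, linkMat, of_apply, hσσ',
      hunion, smul_eq_mul]
    have hiX : insert i τ ∈ X := hσ ▸ σ.2.1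
    have hjX : insert j τ ∈ X := hσ' ▸ σ'.2.1
    simp only [hi, hj, hiX, hjX, not_false_eq_true, and_true, true_and, if_true, ← hσ, ← hσ']
    ring
  · rw [transpose_linkIncidence_mul_mul_apply_of_not_subset _ h, localMat, of_apply, if_neg h]

theorem localMat_posSemidef (hdown : ∀ σ ∈ X, ∀ τ ⊆ σ, τ ∈ X) (hw : IsBalanced n X d w)
    (hlse : IsZeroLSE n X d w) {τ : Finset (Fin n)} (hτ : τ ∈ X) (hτk : τ.card + 1 = k)
    (hkd : k < d) : (localMat X w k τ).PosSemidef := by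
  have hA := linkMat_isHermitian (X := X) (w := w) τ
  have hu := one_dotProduct_linkMat_mulVec_one hdown hw hτ (by omega)
  have hB := hA.posSemidef_inv_smul_vecMulVec_sub (hlse τ hτ (by omega) hA) (hu ▸ hw.1 τ hτ)
  rw [localMat_eq hdown hw hτk hkd, ← hu]
  simpa using hB.conjTranspose_mul_mul_same (linkIncidence X k τ)

theorem diagonal_mul_walk_eq_sum_localMat (hdown : ∀ σ ∈ X, ∀ τ ⊆ σ, τ ∈ X)
    (hpos : ∀ τ ∈ X, 0 < w τ) (hk : 1 ≤ k) :
    diagonal (fun τ : Face n X k => w τ.1) *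
      (((k : ℝ) / ((k : ℝ) + 1)) • Pdown n X w k +
        (1 / ((k : ℝ) + 1)) • (1 : Matrix (Face n X k) (Face n X k) ℝ) - Pup n X w k)
      = ((k : ℝ) + 1)⁻¹ • ∑ τ ∈ X.filter (·.card = k - 1), localMat X w k τ := by
  ext σ σ'
  rw [diagonal_mul, Matrix.smul_apply, Matrix.sum_apply]
  simp only [localMat, of_apply, Matrix.add_apply, Matrix.sub_apply, Matrix.smul_apply, Pdown,
    Pup, smul_eq_mul]
  rcases eq_or_ne σ σ' with rfl | hne
  · have hfilter : X.filter (fun τ => τ ⊆ σ.1 ∧ τ.card = k - 1)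
        = (X.filter (·.card = k - 1)).filter (· ⊆ σ.1) := by
      ext; simp only [mem_filter]; tauto
    simp only [if_true, one_apply_eq, and_self, ne_eq, not_true_eq_false, false_and,
      if_false, sub_zero, mul_one, add_sub_cancel_right]
    rw [← sum_filter, ← hfilter, mul_sum, mul_sum, mul_sum]
    refine sum_congr rfl fun τ hτ => ?_
    have hwτ := hpos τ (mem_filter.1 hτ).1
    field_simp
  · have hs : σ.1 ∩ σ'.1 ∈ X := hdown _ σ.2.1 _ inter_subset_left
    have hlt := card_inter_lt_of_ne σ.2.2 σ'.2.2 (Subtype.coe_ne_coe.2 hne)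
    have hcard : (σ.1 ∩ σ'.1).card + (σ.1 ∪ σ'.1).card = k + k := by
      rw [card_inter_add_card_union, σ.2.2, σ'.2.2]
    simp only [hne, one_apply_ne hne, if_false, ne_eq, not_false_eq_true, true_and, mul_zero,
      add_zero, ← subset_inter_iff]
    rw [sum_filter_card_ite_subset hs (by omega)]
    by_cases hc : (σ.1 ∩ σ'.1).card = k - 1
    · have hwσ := hpos _ σ.2.1
      have hws := hpos _ hs
      simp only [hs, hc, if_true, show (σ.1 ∪ σ'.1).card = k + 1 by omega, and_true]
      split_ifs
      · field_simp
      · field_simp; ring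
    · simp [hc, show (σ.1 ∪ σ'.1).card ≠ k + 1 by omega]

end Link

theorem stmt3 (n d : ℕ) (X : Finset (Finset (Fin n))) (w : Finset (Fin n) → ℝ)
    (hX : IsPureComplex n X d) (hw : IsBalanced n X d w) (hlse : IsZeroLSE n X d w)
    (k : ℕ) (hk1 : 1 ≤ k) (hkd : k < d) :
    (Matrix.diagonal (fun τ : Face n X k => w τ.1) *
      (((k : ℝ) / ((k : ℝ) + 1)) • Pdown n X w k + (1 / ((k : ℝ) + 1)) • (1 : Matrix (Face n X k) (Face n X k) ℝ)
        - Pup n X w k)).PosSemidef := by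
  obtain ⟨-, hdown, -⟩ := hX
  rw [diagonal_mul_walk_eq_sum_localMat hdown hw.1 hk1]
  refine PosSemidef.smul (posSemidef_sum _ fun τ hτ => ?_) (by positivity)
  obtain ⟨hτX, hτk⟩ := mem_filter.1 hτ
  exact localMat_posSemidef hdown hw hlse hτX (by omega) hkd
end
end

section
/- Let (X,w) be a pure d-dimensional simplicial complex on {1,…,n} with a balanced weight function, and let 1 ≤ k < d. Then: (i) P_k^∧ and P_{k+1}^∨ are row-stochastic (nonnegative entries, each row summing to 1); (ii) the matrices D_k·P_k^∧ and D_{k+1}·P_{k+1}^∨ are symmetric and positive semidefinite, where D_j is the diagonal matrix indexed by X(j) with entries w(τ); and (iii) P_k^∧ and P_{k+1}^∨ have the same nonzero eigenvalues with the same multiplicities: x^{|X(k+1)|}·charpoly(P_k^∧)(x) = x^{|X(k)|}·charpoly(P_{k+1}^∨)(x) as polynomials in x. -/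
open Matrix Finset
open scoped Classical

noncomputable section

variable (n : ℕ)

/-!
Both walks factor through the inclusion relation between `X(k)` and `X(k+1)`. Let `N` be the
incidence matrix (`N σ τ = 1` iff `τ ⊆ σ`), `U = D_k⁻¹ Nᵀ D_{k+1}` the step up to a superface
chosen with probability `w σ / w τ`, and `(k+1)⁻¹ N` the step down to a uniformly chosen facet.
Both steps are row-stochastic (by balancedness, resp. since a face with `k+1` vertices has `k+1`
facets), and `P_k^∧ = U (k+1)⁻¹ N`, `P_{k+1}^∨ = (k+1)⁻¹ N U`. So both walks are stochastic, the
products `D P` are Gram matrices `Bᵀ D' B` with nonnegative diagonal `D'`, and `AB`, `BA` have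
the same nonzero spectrum.
-/

theorem Matrix.mul_mem_rowStochastic {R l m : Type*} [Fintype l] [DecidableEq l] [Fintype m]
    [Semiring R] [PartialOrder R] [IsOrderedRing R] {A : Matrix l m R} {B : Matrix m l R}
    (hA : ∀ i j, 0 ≤ A i j) (hA1 : A *ᵥ 1 = 1) (hB : ∀ i j, 0 ≤ B i j) (hB1 : B *ᵥ 1 = 1) :
    A * B ∈ rowStochastic R l :=
  ⟨fun i j => Finset.sum_nonneg fun x _ => mul_nonneg (hA i x) (hB x j),
    by rw [← mulVec_mulVec, hB1, hA1]⟩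

theorem Matrix.posSemidef_transpose_mul_diagonal_mul {m p : Type*} [Fintype m] [DecidableEq m]
    [Fintype p] {d : m → ℝ} (hd : 0 ≤ d) (B : Matrix m p ℝ) :
    (Bᵀ * diagonal d * B).PosSemidef := by
  simpa only [conjTranspose_eq_transpose_of_trivial] using
    (PosSemidef.diagonal hd).conjTranspose_mul_mul_same B

section FinsetCard

variable {α : Type*} [DecidableEq α] {s t u : Finset α} {k : ℕ}

theorem Finset.subset_and_subset_iff_union_eq (hst : s ≠ t) (hs : s.card = k) (ht : t.card = k)
    (hu : u.card = k + 1) : s ⊆ u ∧ t ⊆ u ↔ s ∪ t = u := by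
  refine ⟨fun ⟨hsu, htu⟩ => eq_of_subset_of_card_le (union_subset hsu htu) ?_,
    fun h => h ▸ ⟨subset_union_left, subset_union_right⟩⟩
  have hlt : s.card < (s ∪ t).card := card_lt_card <| ssubset_iff_subset_ne.2
    ⟨subset_union_left, fun h => hst (eq_of_subset_of_card_le (h ▸ subset_union_right)
      (by rw [hs, ht])).symm⟩
  omega

theorem Finset.subset_and_subset_iff_inter_eq (hst : s ≠ t) (hs : s.card = k + 1)
    (ht : t.card = k + 1) (hu : u.card = k) : u ⊆ s ∧ u ⊆ t ↔ s ∩ t = u := by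
  refine ⟨fun ⟨hus, hut⟩ => (eq_of_subset_of_card_le (subset_inter hus hut) ?_).symm,
    fun h => h ▸ ⟨inter_subset_left, inter_subset_right⟩⟩
  have hlt : (s ∩ t).card < s.card := card_lt_card <| ssubset_iff_subset_ne.2
    ⟨inter_subset_left, fun h => hst (eq_of_subset_of_card_le (h ▸ inter_subset_right)
      (by rw [hs, ht]))⟩
  omega

end FinsetCard

def faceIncidence (X : Finset (Finset (Fin n))) (k : ℕ) :
    Matrix (Face n X (k + 1)) (Face n X k) ℝ :=
  of fun σ τ => if τ.1 ⊆ σ.1 then 1 else 0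

def downStep (X : Finset (Finset (Fin n))) (k : ℕ) : Matrix (Face n X (k + 1)) (Face n X k) ℝ :=
  ((k : ℝ) + 1)⁻¹ • faceIncidence n X k

def upStep (X : Finset (Finset (Fin n))) (w : Finset (Fin n) → ℝ) (k : ℕ) :
    Matrix (Face n X k) (Face n X (k + 1)) ℝ :=
  diagonal (fun τ : Face n X k => (w τ.1)⁻¹) * (faceIncidence n X k)ᵀ *
    diagonal (fun σ : Face n X (k + 1) => w σ.1)

section Faces

variable {n d k : ℕ} {X : Finset (Finset (Fin n))} {w : Finset (Fin n) → ℝ}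

theorem sum_face_eq_sum_filter (f : Finset (Fin n) → ℝ) :
    ∑ σ : Face n X k, f σ.1 = ∑ σ ∈ X with σ.card = k, f σ :=
  (Finset.sum_subtype _ (fun _ => Finset.mem_filter) f).symm

theorem sum_face_ite_eq (s : Finset (Fin n)) (f : Finset (Fin n) → ℝ) :
    ∑ σ : Face n X k, (if s = σ.1 then f σ.1 else 0) = if s ∈ X ∧ s.card = k then f s else 0 := by
  rw [sum_face_eq_sum_filter (fun σ => if s = σ then f σ else 0), Finset.sum_ite_eq]
  simp only [Finset.mem_filter]

theorem sum_superfaces_weight_eq (hw : IsBalanced n X d w) (hkd : k < d)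
    (τ : Face n X k) : ∑ σ : Face n X (k + 1), (if τ.1 ⊆ σ.1 then w σ.1 else 0) = w τ.1 := by
  rw [sum_face_eq_sum_filter (fun σ => if τ.1 ⊆ σ then w σ else 0), ← Finset.sum_filter,
    Finset.filter_filter, hw.2 τ.1 τ.2.1 (by rw [τ.2.2]; exact hkd), τ.2.2]
  exact Finset.sum_congr (Finset.filter_congr fun _ _ => and_comm) fun _ _ => rfl

theorem sum_subfaces_one_eq (hdown : ∀ σ ∈ X, ∀ τ ⊆ σ, τ ∈ X) (σ : Face n X (k + 1)) :
    ∑ τ : Face n X k, (if τ.1 ⊆ σ.1 then (1 : ℝ) else 0) = k + 1 := by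
  rw [sum_face_eq_sum_filter (fun τ => if τ ⊆ σ.1 then (1 : ℝ) else 0), ← Finset.sum_filter,
    Finset.filter_filter]
  have hfaces : {τ ∈ X | τ.card = k ∧ τ ⊆ σ.1} = σ.1.powersetCard k := by
    ext τ
    simp only [Finset.mem_filter, Finset.mem_powersetCard]
    exact ⟨fun ⟨_, hcard, hsub⟩ => ⟨hsub, hcard⟩,
      fun ⟨hsub, hcard⟩ => ⟨hdown σ.1 σ.2.1 τ hsub, hcard, hsub⟩⟩
  rw [hfaces, Finset.sum_const, Finset.card_powersetCard, σ.2.2, Nat.choose_succ_self_right]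
  simp

theorem downStep_apply (σ : Face n X (k + 1)) (τ : Face n X k) :
    downStep n X k σ τ = if τ.1 ⊆ σ.1 then ((k : ℝ) + 1)⁻¹ else 0 := by
  simp [downStep, faceIncidence]

theorem upStep_apply (τ : Face n X k) (σ : Face n X (k + 1)) :
    upStep n X w k τ σ = if τ.1 ⊆ σ.1 then w σ.1 / w τ.1 else 0 := by
  simp only [upStep, mul_diagonal, diagonal_mul, transpose_apply, faceIncidence, of_apply]
  split_ifs <;> simp [div_eq_inv_mul]

theorem downStep_nonneg (σ : Face n X (k + 1)) (τ : Face n X k) : 0 ≤ downStep n X k σ τ := by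
  rw [downStep_apply]
  split_ifs <;> positivity

theorem downStep_mulVec_one (hdown : ∀ σ ∈ X, ∀ τ ⊆ σ, τ ∈ X) :
    downStep n X k *ᵥ 1 = 1 := by
  funext σ
  simp only [mulVec, dotProduct, Pi.one_apply, mul_one, downStep, Matrix.smul_apply, smul_eq_mul,
    ← Finset.mul_sum, faceIncidence, of_apply, sum_subfaces_one_eq hdown σ]
  exact inv_mul_cancel₀ (by positivity)

theorem upStep_nonneg (hw : IsBalanced n X d w) (τ : Face n X k) (σ : Face n X (k + 1)) :
    0 ≤ upStep n X w k τ σ := by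
  rw [upStep_apply]
  split_ifs
  · exact div_nonneg (hw.1 _ σ.2.1).le (hw.1 _ τ.2.1).le
  · rfl

theorem upStep_mulVec_one (hw : IsBalanced n X d w) (hkd : k < d) : upStep n X w k *ᵥ 1 = 1 := by
  funext τ
  calc ∑ σ, upStep n X w k τ σ * 1
        = (∑ σ : Face n X (k + 1), if τ.1 ⊆ σ.1 then w σ.1 else 0) / w τ.1 := by
        rw [Finset.sum_div]
        refine Finset.sum_congr rfl fun σ _ => ?_
        rw [upStep_apply]
        split_ifs <;> simp
    _ = 1 := by rw [sum_superfaces_weight_eq hw hkd, div_self (hw.1 _ τ.2.1).ne']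

theorem Pup_eq_upStep_mul_downStep (hw : IsBalanced n X d w) (hkd : k < d) :
    Pup n X w k = upStep n X w k * downStep n X k := by
  ext τ τ'
  have hprod : (upStep n X w k * downStep n X k) τ τ' =
      (∑ σ : Face n X (k + 1), if τ.1 ⊆ σ.1 ∧ τ'.1 ⊆ σ.1 then w σ.1 else 0) /
        (((k : ℝ) + 1) * w τ.1) := by
    rw [mul_apply, Finset.sum_div]
    refine Finset.sum_congr rfl fun σ _ => ?_
    rw [upStep_apply, downStep_apply, ite_zero_mul_ite_zero, ite_div, zero_div]
    simp only [div_eq_mul_inv, mul_inv]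
    split_ifs <;> ring
  rw [hprod, Pup, of_apply]
  by_cases h : τ = τ'
  · subst h
    have hτ : w τ.1 ≠ 0 := (hw.1 _ τ.2.1).ne'
    simp only [if_true, and_self, sum_superfaces_weight_eq hw hkd]
    field_simp
  · have hunion (σ : Face n X (k + 1)) : τ.1 ⊆ σ.1 ∧ τ'.1 ⊆ σ.1 ↔ τ.1 ∪ τ'.1 = σ.1 :=
      Finset.subset_and_subset_iff_union_eq (Subtype.coe_ne_coe.2 h) τ.2.2 τ'.2.2 σ.2.2
    simp only [hunion, sum_face_ite_eq, if_neg h]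
    split_ifs <;> simp

theorem Pdown_eq_downStep_mul_upStep :
    Pdown n X w (k + 1) = downStep n X k * upStep n X w k := by
  ext σ σ'
  have hprod : (downStep n X k * upStep n X w k) σ σ' = ∑ τ : Face n X k,
      if τ.1 ⊆ σ.1 ∧ τ.1 ⊆ σ'.1 then w σ'.1 / (((k : ℝ) + 1) * w τ.1) else 0 := by
    rw [mul_apply]
    refine Finset.sum_congr rfl fun τ _ => ?_
    rw [downStep_apply, upStep_apply, ite_zero_mul_ite_zero]
    simp only [div_eq_mul_inv, mul_inv]
    split_ifs <;> ring
  rw [hprod, Pdown, of_apply, Nat.add_sub_cancel]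
  push_cast
  by_cases h : σ = σ'
  · subst h
    simp only [if_true, and_self]
    rw [sum_face_eq_sum_filter (fun τ => if τ ⊆ σ.1 then w σ.1 / (((k : ℝ) + 1) * w τ) else 0),
      ← Finset.sum_filter, Finset.filter_filter]
    exact Finset.sum_congr (Finset.filter_congr fun _ _ => and_comm) fun _ _ => rfl
  · have hinter (τ : Face n X k) : τ.1 ⊆ σ.1 ∧ τ.1 ⊆ σ'.1 ↔ σ.1 ∩ σ'.1 = τ.1 :=
      Finset.subset_and_subset_iff_inter_eq (Subtype.coe_ne_coe.2 h) σ.2.2 σ'.2.2 τ.2.2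
    simp only [hinter, if_neg h]
    exact (sum_face_ite_eq _ fun τ => w σ'.1 / (((k : ℝ) + 1) * w τ)).symm

theorem diagonal_mul_Pup_eq (hw : IsBalanced n X d w) (hkd : k < d) :
    diagonal (fun τ : Face n X k => w τ.1) * Pup n X w k =
      (faceIncidence n X k)ᵀ * diagonal (fun σ : Face n X (k + 1) => ((k : ℝ) + 1)⁻¹ * w σ.1) *
        faceIncidence n X k := by
  have hcancel : diagonal (fun τ : Face n X k => w τ.1) * diagonal (fun τ => (w τ.1)⁻¹) = 1 := by
    rw [diagonal_mul_diagonal, ← diagonal_one]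
    exact congrArg diagonal (funext fun τ => mul_inv_cancel₀ (hw.1 _ τ.2.1).ne')
  calc _ = diagonal (fun τ : Face n X k => w τ.1) * diagonal (fun τ => (w τ.1)⁻¹) *
        (faceIncidence n X k)ᵀ * (((k : ℝ) + 1)⁻¹ • diagonal fun σ : Face n X (k + 1) => w σ.1) *
        faceIncidence n X k := by
        simp only [Pup_eq_upStep_mul_downStep hw hkd, upStep, downStep, Matrix.mul_assoc,
          Matrix.mul_smul, Matrix.smul_mul]
    _ = _ := by rw [hcancel, Matrix.one_mul, ← diagonal_smul]; rfl

theorem diagonal_mul_Pdown_eq :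
    diagonal (fun σ : Face n X (k + 1) => w σ.1) * Pdown n X w (k + 1) =
      ((faceIncidence n X k)ᵀ * diagonal (fun σ : Face n X (k + 1) => w σ.1))ᵀ *
        diagonal (fun τ : Face n X k => ((k : ℝ) + 1)⁻¹ * (w τ.1)⁻¹) *
        ((faceIncidence n X k)ᵀ * diagonal (fun σ : Face n X (k + 1) => w σ.1)) := by
  rw [Pdown_eq_downStep_mul_upStep, upStep, downStep, transpose_mul, diagonal_transpose,
    transpose_transpose]
  calc _ = diagonal (fun σ : Face n X (k + 1) => w σ.1) * faceIncidence n X k *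
        (((k : ℝ) + 1)⁻¹ • diagonal fun τ : Face n X k => (w τ.1)⁻¹) *
        ((faceIncidence n X k)ᵀ * diagonal (fun σ : Face n X (k + 1) => w σ.1)) := by
        simp only [Matrix.mul_assoc, Matrix.mul_smul, Matrix.smul_mul]
    _ = _ := by rw [← diagonal_smul]; rfl

end Faces

theorem stmt4_general (n d : ℕ) (X : Finset (Finset (Fin n))) (w : Finset (Fin n) → ℝ)
    (hX : IsPureComplex n X d) (hw : IsBalanced n X d w)
    (k : ℕ) (hkd : k < d) :
    -- (i) both walks are row-stochastic
    ((∀ τ σ : Face n X k, 0 ≤ Pup n X w k τ σ) ∧ (∀ τ : Face n X k, ∑ σ, Pup n X w k τ σ = 1) ∧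
     (∀ τ σ : Face n X (k+1), 0 ≤ Pdown n X w (k+1) τ σ) ∧
     (∀ τ : Face n X (k+1), ∑ σ, Pdown n X w (k+1) τ σ = 1)) ∧
    -- (ii) `D_k P_k^∧` and `D_{k+1} P_{k+1}^∨` are symmetric PSD
    ((Matrix.diagonal (fun τ : Face n X k => w τ.1) * Pup n X w k).PosSemidef ∧
     (Matrix.diagonal (fun τ : Face n X (k+1) => w τ.1) * Pdown n X w (k+1)).PosSemidef) ∧
    -- (iii) same nonzero eigenvalues with multiplicity, via characteristic polynomials
    (Polynomial.X ^ (Fintype.card (Face n X (k+1))) * (Pup n X w k).charpoly =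
      Polynomial.X ^ (Fintype.card (Face n X k)) * (Pdown n X w (k+1)).charpoly) := by
  have hup := upStep_mulVec_one hw hkd
  have hdown := downStep_mulVec_one (k := k) hX.2.1
  have hPup : Pup n X w k ∈ rowStochastic ℝ (Face n X k) := Pup_eq_upStep_mul_downStep hw hkd ▸
    mul_mem_rowStochastic (upStep_nonneg hw) hup downStep_nonneg hdown
  have hPdown : Pdown n X w (k + 1) ∈ rowStochastic ℝ (Face n X (k + 1)) :=
    Pdown_eq_downStep_mul_upStep ▸
      mul_mem_rowStochastic downStep_nonneg hdown (upStep_nonneg hw) hup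
  refine ⟨⟨fun _ _ => nonneg_of_mem_rowStochastic hPup, sum_row_of_mem_rowStochastic hPup,
    fun _ _ => nonneg_of_mem_rowStochastic hPdown, sum_row_of_mem_rowStochastic hPdown⟩,
    ⟨?_, ?_⟩, ?_⟩
  · rw [diagonal_mul_Pup_eq hw hkd]
    exact posSemidef_transpose_mul_diagonal_mul (fun σ => by have := hw.1 _ σ.2.1; positivity) _
  · rw [diagonal_mul_Pdown_eq]
    exact posSemidef_transpose_mul_diagonal_mul (fun τ => by have := hw.1 _ τ.2.1; positivity) _
  · rw [Pup_eq_upStep_mul_downStep hw hkd, Pdown_eq_downStep_mul_upStep]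
    exact charpoly_mul_comm' _ _

theorem stmt4 (n d : ℕ) (X : Finset (Finset (Fin n))) (w : Finset (Fin n) → ℝ)
    (hX : IsPureComplex n X d) (hw : IsBalanced n X d w)
    (k : ℕ) (hk1 : 1 ≤ k) (hkd : k < d) :
    -- (i) both walks are row-stochastic
    ((∀ τ σ : Face n X k, 0 ≤ Pup n X w k τ σ) ∧ (∀ τ : Face n X k, ∑ σ, Pup n X w k τ σ = 1) ∧
     (∀ τ σ : Face n X (k+1), 0 ≤ Pdown n X w (k+1) τ σ) ∧
     (∀ τ : Face n X (k+1), ∑ σ, Pdown n X w (k+1) τ σ = 1)) ∧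
    -- (ii) `D_k P_k^∧` and `D_{k+1} P_{k+1}^∨` are symmetric PSD
    ((Matrix.diagonal (fun τ : Face n X k => w τ.1) * Pup n X w k).PosSemidef ∧
     (Matrix.diagonal (fun τ : Face n X (k+1) => w τ.1) * Pdown n X w (k+1)).PosSemidef) ∧
    -- (iii) same nonzero eigenvalues with multiplicity, via characteristic polynomials
    (Polynomial.X ^ (Fintype.card (Face n X (k+1))) * (Pup n X w k).charpoly =
      Polynomial.X ^ (Fintype.card (Face n X k)) * (Pdown n X w (k+1)).charpoly) :=
  stmt4_general n d X w hX hw k hkd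

end
end
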